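/- Let q = 2^s and let ũ_n be the product over the upper triangular unipotent subgroup of GL_n(F_q) of the orbit of the variables, equivalently ũ_n = det(M) where M is the n×n matrix with (i,j) entry x_j^{q^{i-1}}. Then for 0 < k < q^{n-1}, the Steenrod operation P^k(ũ_n) = 0. -/

import Mathlib

open MvPolynomial

/-- The complete Steenrod operator `P(t)`, the algebra homomorphism determined
by `v ↦ v + v^q t` on degree-one elements. -/
noncomputable def stP (q : ℕ) (σ : Type*) (F : Type*) [Field F] :
    MvPolynomial σ F →ₐ[F] Polynomial (MvPolynomial σ F) :=
  MvPolynomial.aeval fun i =>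
    Polynomial.C (MvPolynomial.X i) + Polynomial.C (MvPolynomial.X i ^ q) * Polynomial.X

/-- The Moore determinant `ũ_n = det (x_j^{q^{i-1}})_{1 ≤ i,j ≤ n}`. -/
noncomputable def uTilde (q n : ℕ) (F : Type*) [Field F] : MvPolynomial (Fin n) F :=
  (Matrix.of fun i j : Fin n => (X j : MvPolynomial (Fin n) F) ^ q ^ (i : ℕ)).det

/-! The Moore determinant has rows `(x_j ^ q ^ i)_j`. As `q` is a power of the characteristic,
`P(t)` sends `x ^ q ^ i` to `x ^ q ^ i + x ^ q ^ (i + 1) t ^ q ^ i`, i.e. it replaces row `i` by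
`row i + t ^ q ^ i • row (i + 1)`. Expanding the determinant row by row, the coefficient of `t ^ k`
is a sum of determinants, one for each set `S` of shifted rows with `k = ∑ i ∈ S, q ^ i`. For
`0 < k < q ^ (n - 1)` the largest `i ∈ S` has `i + 1 < n` and `i + 1 ∉ S`, so rows `i` and `i + 1`
of that determinant coincide. -/

theorem stP_X_pow_pow {σ F : Type*} [Field F] (p : ℕ) [ExpChar F p] {q m : ℕ} (hq : q = p ^ m)
    (j : σ) (e : ℕ) :
    stP q σ F (X j ^ q ^ e) =
      Polynomial.C (X j ^ q ^ e) + Polynomial.C (X j ^ q ^ (e + 1)) * Polynomial.X ^ q ^ e := by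
  have hqe : q ^ e = p ^ (m * e) := by rw [hq, pow_mul]
  rw [map_pow, stP, aeval_X, hqe, add_pow_expChar_pow, ← hqe, mul_pow, ← Polynomial.C_pow,
    ← Polynomial.C_pow, ← pow_mul, ← pow_succ']

theorem Matrix.det_add_diagonal_mul {n R : Type*} [Fintype n] [DecidableEq n] [CommRing R]
    (A B : Matrix n n R) (c : n → R) :
    (A + Matrix.diagonal c * B).det =
      ∑ S : Finset n, (∏ i ∈ S, c i) * (Matrix.of fun i => if i ∈ S then B i else A i).det := by
  let D : MultilinearMap R (fun _ : n => n → R) R := Matrix.detRowAlternating.toMultilinearMap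
  have hdiag : Matrix.diagonal c * B = Matrix.of fun i => c i • B i := by
    ext i j
    simp [Matrix.diagonal_mul]
  rw [add_comm, hdiag]
  refine (D.map_add_univ (fun i => c i • B i) A).trans (Finset.sum_congr rfl fun S _ => ?_)
  have hrows : S.piecewise (fun i => c i • B i) A =
      fun i => (if i ∈ S then c i else 1) • if i ∈ S then B i else A i := by
    funext i
    by_cases h : i ∈ S <;> simp [Finset.piecewise, h]
  rw [hrows, D.map_smul_univ, Finset.prod_ite_mem, Finset.univ_inter]
  rfl

theorem Matrix.det_ite_mem_succ_eq_zero {R : Type*} [CommRing R] {n : ℕ} (f : ℕ → Fin n → R)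
    {S : Finset (Fin n)} {i : Fin n} (hi : i ∈ S) (hin : (i : ℕ) + 1 < n)
    (hiS : (⟨i + 1, hin⟩ : Fin n) ∉ S) :
    (Matrix.of fun i : Fin n => f (if i ∈ S then i + 1 else i)).det = 0 := by
  refine Matrix.det_zero_of_row_eq (i := i) (j := ⟨i + 1, hin⟩) (fun h => ?_) ?_
  · simpa using congrArg Fin.val h
  · funext j
    simp [hi, hiS]

theorem Finset.Nonempty.exists_mem_succ_notMem_of_sum_pow_lt {n q : ℕ} {S : Finset (Fin n)}
    (hS : S.Nonempty) (hq : 1 < q) (hsum : ∑ i ∈ S, q ^ (i : ℕ) < q ^ (n - 1)) :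
    ∃ i ∈ S, ∃ hin : (i : ℕ) + 1 < n, (⟨i + 1, hin⟩ : Fin n) ∉ S := by
  let i := S.max' hS
  have hiS : i ∈ S := S.max'_mem hS
  have hlt : (i : ℕ) < n - 1 := by
    rw [← Nat.pow_lt_pow_iff_right hq]
    exact (Finset.single_le_sum (f := fun j : Fin n => q ^ (j : ℕ)) (fun _ _ => Nat.zero_le _)
      hiS).trans_lt hsum
  have hin : (i : ℕ) + 1 < n := by omega
  refine ⟨i, hiS, hin, fun h => ?_⟩
  have : ((⟨i + 1, hin⟩ : Fin n) : ℕ) ≤ i := S.le_max' _ h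
  simp at this

noncomputable def mooreRow (q n : ℕ) (F : Type*) [Field F] (e : ℕ) :
    Fin n → MvPolynomial (Fin n) F :=
  fun j => X j ^ q ^ e

theorem stP_uTilde {F : Type*} [Field F] (p : ℕ) [ExpChar F p] {q m : ℕ} (hq : q = p ^ m)
    (n : ℕ) :
    stP q (Fin n) F (uTilde q n F) = ∑ S : Finset (Fin n),
      Polynomial.C (Matrix.of fun i : Fin n => mooreRow q n F (if i ∈ S then i + 1 else i)).det *
        Polynomial.X ^ ∑ i ∈ S, q ^ (i : ℕ) := by
  set A := Matrix.of fun i : Fin n => mooreRow q n F i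
  set B := Matrix.of fun i : Fin n => mooreRow q n F (i + 1)
  have hmap : (stP q (Fin n) F).mapMatrix A = A.map Polynomial.C +
      Matrix.diagonal (fun i : Fin n => Polynomial.X ^ q ^ (i : ℕ)) * B.map Polynomial.C := by
    ext i j
    simp [A, B, mooreRow, Matrix.diagonal_mul, stP_X_pow_pow p hq, mul_comm]
  change stP q (Fin n) F A.det = _
  rw [AlgHom.map_det, hmap, Matrix.det_add_diagonal_mul]
  refine Finset.sum_congr rfl fun S _ => ?_
  have hpiece : (Matrix.of fun i => if i ∈ S then B.map Polynomial.C i else A.map Polynomial.C i)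
      = Polynomial.C.mapMatrix
          (Matrix.of fun i : Fin n => mooreRow q n F (if i ∈ S then i + 1 else i)) := by
    ext i j
    by_cases h : i ∈ S <;> simp [A, B, h]
  rw [hpiece, ← RingHom.map_det, Finset.prod_pow_eq_pow_sum, mul_comm]

theorem stmt_5_general {F : Type*} [Field F] [Fintype F] (n q : ℕ)
    (hF : Fintype.card F = q) (k : ℕ) (hk0 : 0 < k)
    (hk : k < q ^ (n - 1)) :
    ((stP q (Fin n) F) (uTilde q n F)).coeff k = 0 := by
  obtain ⟨p, hchar⟩ := CharP.exists F
  obtain ⟨m, hp, hcard⟩ := FiniteField.card F p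
  have : Fact p.Prime := ⟨hp⟩
  have hq1 : 1 < q := hF ▸ Fintype.one_lt_card
  rw [stP_uTilde p (hF ▸ hcard), Polynomial.finsetSum_coeff]
  refine Finset.sum_eq_zero fun S _ => ?_
  rw [Polynomial.coeff_C_mul_X_pow]
  split_ifs with hkS
  · have hS : S.Nonempty := Finset.nonempty_iff_ne_empty.2 fun h => by simp [h] at hkS; omega
    obtain ⟨i, hi, hin, hiS⟩ := hS.exists_mem_succ_notMem_of_sum_pow_lt hq1 (hkS ▸ hk)
    exact Matrix.det_ite_mem_succ_eq_zero _ hi hin hiS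
  · rfl

/-- For `0 < k < q^{n-1}` the Steenrod operation `P^k(ũ_n) = 0`. -/
theorem stmt_5 {F : Type*} [Field F] [Fintype F] (s n q : ℕ) (hs : 1 ≤ s)
    (hq : q = 2 ^ s) (hF : Fintype.card F = q) (k : ℕ) (hk0 : 0 < k)
    (hk : k < q ^ (n - 1)) :
    ((stP q (Fin n) F) (uTilde q n F)).coeff k = 0 :=
  stmt_5_general n q hF k hk0 hk
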